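/- arXiv:1907.02592 — 3 statements merged into one kernel-verified Lean document; each statement's English description precedes it below -/
import Mathlib

section
/- There exists ε₀ > 0 such that for every ε ∈ (0, ε₀]: the quantity p_ε := min{ u ≥ 0 : F(u,ε) ≤ 0 } is well defined and satisfies 0 < p_ε ≤ 1, F(p_ε, ε) = 0 and F(u,ε) > 0 for all 0 ≤ u < p_ε; moreover the map ε ↦ p_ε is nonincreasing on (0, ε₀], bounded above by 1, and p_ε → 1 as ε → 0⁺. (Part of Lemma 4.1.) -/
open Filter Set

noncomputable section

/-- `p_ε := min { u ≥ 0 : F(u,ε) ≤ 0 }`. -/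
noncomputable def pe (F : ℝ → ℝ → ℝ) (ε : ℝ) : ℝ :=
  sInf {u : ℝ | 0 ≤ u ∧ F u ε ≤ 0}

/-- Part of Lemma 4.1: properties of `p_ε` for small `ε > 0`. -/
theorem pe_properties
    (F : ℝ → ℝ → ℝ)
    (hF : ContDiffOn ℝ 1 (Function.uncurry F) (Set.Ici (0 : ℝ) ×ˢ Set.Ici (0 : ℝ)))
    (hanti : ∀ u : ℝ, 0 ≤ u → AntitoneOn (F u) (Set.Ici (0 : ℝ)))
    (hF10 : F 1 0 = 0)
    (hFpos : ∀ u : ℝ, 0 ≤ u → u < 1 → 0 < F u 0) :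
    ∃ ε₀ : ℝ, 0 < ε₀ ∧
      (∀ ε : ℝ, 0 < ε → ε ≤ ε₀ →
        (pe F ε ∈ {u : ℝ | 0 ≤ u ∧ F u ε ≤ 0}) ∧
        0 < pe F ε ∧ pe F ε ≤ 1 ∧ F (pe F ε) ε = 0 ∧
        (∀ u : ℝ, 0 ≤ u → u < pe F ε → 0 < F u ε)) ∧
      (∀ ε₁ ε₂ : ℝ, 0 < ε₁ → ε₁ ≤ ε₂ → ε₂ ≤ ε₀ → pe F ε₂ ≤ pe F ε₁) ∧
      Filter.Tendsto (fun ε : ℝ => pe F ε) (nhdsWithin 0 (Set.Ioi 0)) (nhds 1) := by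
  have hc : ContinuousOn (Function.uncurry F) (Set.Ici (0:ℝ) ×ˢ Set.Ici (0:ℝ)) :=
    hF.continuousOn
  -- continuity in u for fixed ε ≥ 0
  have hcu : ∀ ε : ℝ, 0 ≤ ε → ContinuousOn (fun u => F u ε) (Set.Ici (0:ℝ)) := by
    intro ε hε
    exact hc.comp (Continuous.continuousOn (by continuity : Continuous fun u : ℝ => (u, ε)))
      (fun u hu => ⟨hu, hε⟩)
  -- 1 belongs to the set
  have hone : ∀ ε : ℝ, 0 ≤ ε → (1:ℝ) ∈ {u : ℝ | 0 ≤ u ∧ F u ε ≤ 0} := by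
    intro ε hε
    refine ⟨zero_le_one, ?_⟩
    have := hanti 1 zero_le_one (show (0:ℝ) ∈ Set.Ici (0:ℝ) from Set.self_mem_Ici)
      (show ε ∈ Set.Ici (0:ℝ) from hε) hε
    rwa [hF10] at this
  have hbdd : ∀ ε : ℝ, BddBelow {u : ℝ | 0 ≤ u ∧ F u ε ≤ 0} :=
    fun ε => ⟨0, fun u hu => hu.1⟩
  have hclosed : ∀ ε : ℝ, 0 ≤ ε → IsClosed {u : ℝ | 0 ≤ u ∧ F u ε ≤ 0} := by
    intro ε hε
    have : {u : ℝ | 0 ≤ u ∧ F u ε ≤ 0}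
        = Set.Ici (0:ℝ) ∩ (fun u => F u ε) ⁻¹' Set.Iic (0:ℝ) := by
      ext u; simp [Set.mem_Ici, Set.mem_Iic]
    rw [this]
    exact (hcu ε hε).preimage_isClosed_of_isClosed isClosed_Ici isClosed_Iic
  have hpe_mem : ∀ ε : ℝ, 0 ≤ ε → pe F ε ∈ {u : ℝ | 0 ≤ u ∧ F u ε ≤ 0} :=
    fun ε hε => (hclosed ε hε).csInf_mem ⟨1, hone ε hε⟩ (hbdd ε)
  have hpe_le_one : ∀ ε : ℝ, 0 ≤ ε → pe F ε ≤ 1 :=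
    fun ε hε => csInf_le (hbdd ε) (hone ε hε)
  -- strict positivity below pe
  have hlt : ∀ ε : ℝ, ∀ u : ℝ, 0 ≤ u → u < pe F ε → 0 < F u ε := by
    intro ε u hu hlt
    by_contra h
    push_neg at h
    exact absurd (csInf_le (hbdd ε) ⟨hu, h⟩) (not_le.2 hlt)
  -- antitone property on all of (0,∞)
  have hmono : ∀ ε₁ ε₂ : ℝ, 0 < ε₁ → ε₁ ≤ ε₂ → pe F ε₂ ≤ pe F ε₁ := by
    intro ε₁ ε₂ h1 h12
    apply csInf_le_csInf (hbdd ε₂) ⟨1, hone ε₁ h1.le⟩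
    intro u hu
    exact ⟨hu.1, le_trans (hanti u hu.1 (show ε₁ ∈ Set.Ici (0:ℝ) from h1.le)
      (show ε₂ ∈ Set.Ici (0:ℝ) from (h1.le.trans h12)) h12) hu.2⟩
  -- find ε₀ with F 0 ε > 0 for ε ∈ (0, ε₀]
  have hF00 : 0 < F 0 0 := hFpos 0 le_rfl zero_lt_one
  have hc0 : ContinuousWithinAt (fun ε => F 0 ε) (Set.Ici (0:ℝ)) 0 := by
    have : ContinuousOn (fun ε => F 0 ε) (Set.Ici (0:ℝ)) :=
      hc.comp (Continuous.continuousOn (by continuity : Continuous fun ε : ℝ => ((0:ℝ), ε)))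
        (fun ε hε => ⟨Set.self_mem_Ici, hε⟩)
    exact this 0 Set.self_mem_Ici
  obtain ⟨ε₀, hε₀pos, hε₀⟩ :
      ∃ ε₀ : ℝ, 0 < ε₀ ∧ ∀ ε : ℝ, 0 < ε → ε ≤ ε₀ → 0 < F 0 ε := by
    have hmem : (fun ε => F 0 ε) ⁻¹' Set.Ioi (0:ℝ) ∈ nhdsWithin 0 (Set.Ici (0:ℝ)) :=
      hc0 (Ioi_mem_nhds hF00)
    rw [Metric.mem_nhdsWithin_iff] at hmem
    obtain ⟨r, hr, hsub⟩ := hmem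
    refine ⟨r / 2, by positivity, fun ε hε hεr => ?_⟩
    have : ε ∈ Metric.ball (0:ℝ) r ∩ Set.Ici (0:ℝ) := by
      constructor
      · simp only [Metric.mem_ball, Real.dist_eq, sub_zero, abs_of_pos hε]
        linarith
      · exact hε.le
    exact hsub this
  -- positivity of pe and F (pe) ε = 0 for ε ∈ (0, ε₀]
  have hpe_pos : ∀ ε : ℝ, 0 < ε → ε ≤ ε₀ → 0 < pe F ε := by
    intro ε hε hεε₀
    rcases lt_or_eq_of_le (hpe_mem ε hε.le).1 with h | h
    · exact h
    · exfalso
      have h2 := (hpe_mem ε hε.le).2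
      rw [← h] at h2
      exact absurd h2 (not_le.2 (hε₀ ε hε hεε₀))
  have hzero : ∀ ε : ℝ, 0 < ε → ε ≤ ε₀ → F (pe F ε) ε = 0 := by
    intro ε hε hεε₀
    refine le_antisymm (hpe_mem ε hε.le).2 ?_
    by_contra h
    push_neg at h
    have hca : ContinuousAt (fun u => F u ε) (pe F ε) :=
      (hcu ε hε.le).continuousAt (Ici_mem_nhds (hpe_pos ε hε hεε₀))
    have hev : ∀ᶠ u in nhds (pe F ε), F u ε < 0 := hca (Iio_mem_nhds h)
    have hev2 : ∀ᶠ u in nhds (pe F ε), 0 < u :=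
      isOpen_Ioi.eventually_mem (show pe F ε ∈ Set.Ioi (0:ℝ) from hpe_pos ε hε hεε₀)
    have hev3 : ∀ᶠ u in nhdsWithin (pe F ε) (Set.Iio (pe F ε)), F u ε < 0 ∧ 0 < u :=
      (hev.and hev2).filter_mono nhdsWithin_le_nhds
    have hev4 : ∀ᶠ u in nhdsWithin (pe F ε) (Set.Iio (pe F ε)),
        u ∈ Set.Iio (pe F ε) := eventually_mem_nhdsWithin
    obtain ⟨u, ⟨hu1, hu2⟩, hu3⟩ := (hev3.and hev4).exists
    exact absurd (csInf_le (hbdd ε) ⟨hu2.le, hu1.le⟩) (not_le.2 hu3)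
  -- the key claim for the limit
  have claim : ∀ a : ℝ, a < 1 → ∃ ε₁ : ℝ, 0 < ε₁ ∧ ε₁ ≤ ε₀ ∧ a < pe F ε₁ := by
    intro a ha
    by_contra h
    push_neg at h
    have hall : ∀ ε : ℝ, 0 < ε → ε ≤ ε₀ → pe F ε ≤ a := by
      intro ε h1 h2; exact h ε h1 h2
    set x : ℕ → ℝ := fun n => pe F (ε₀ / (n + 1)) with hx
    have hepos : ∀ n : ℕ, 0 < ε₀ / (n + 1) := by
      intro n; positivity
    have hele : ∀ n : ℕ, ε₀ / (n + 1) ≤ ε₀ := by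
      intro n
      apply div_le_self hε₀pos.le
      have : (0:ℝ) ≤ n := Nat.cast_nonneg n
      linarith
    have hxmono : Monotone x := by
      intro m n hmn
      apply hmono _ _ (hepos n)
      apply div_le_div_of_nonneg_left hε₀pos.le (by positivity)
      have : (m:ℝ) ≤ n := Nat.cast_le.2 hmn
      linarith
    have hxbdd : BddAbove (Set.range x) := by
      refine ⟨1, ?_⟩
      rintro _ ⟨n, rfl⟩
      exact hpe_le_one _ (hepos n).le
    set L : ℝ := ⨆ n, x n with hLdef
    have hLtend : Tendsto x atTop (nhds L) := tendsto_atTop_ciSup hxmono hxbdd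
    have hLa : L ≤ a := ciSup_le (fun n => hall _ (hepos n) (hele n))
    have hL0 : 0 ≤ L := le_trans (hpe_mem _ (hepos 0).le).1 (le_ciSup hxbdd 0)
    have he0 : Tendsto (fun n : ℕ => ε₀ / (n + 1)) atTop (nhds 0) := by
      apply Tendsto.const_div_atTop
      exact tendsto_atTop_add_const_right atTop 1 tendsto_natCast_atTop_atTop
    have hprod : Tendsto (fun n : ℕ => (x n, ε₀ / (n + 1))) atTop
        (nhdsWithin (L, 0) (Set.Ici (0:ℝ) ×ˢ Set.Ici (0:ℝ))) := by
      apply tendsto_nhdsWithin_of_tendsto_nhds_of_eventually_within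
      · exact hLtend.prodMk_nhds he0
      · exact Eventually.of_forall fun n => ⟨(hpe_mem _ (hepos n).le).1, (hepos n).le⟩
    have hcw : ContinuousWithinAt (Function.uncurry F)
        (Set.Ici (0:ℝ) ×ˢ Set.Ici (0:ℝ)) (L, 0) := hc (L, 0) ⟨hL0, Set.self_mem_Ici⟩
    have htend : Tendsto (fun n : ℕ => F (x n) (ε₀ / (n + 1))) atTop (nhds (F L 0)) :=
      hcw.tendsto.comp hprod
    have hconst : ∀ n : ℕ, F (x n) (ε₀ / (n + 1)) = 0 :=
      fun n => hzero _ (hepos n) (hele n)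
    have hFL0 : F L 0 = 0 := by
      have : Tendsto (fun _ : ℕ => (0:ℝ)) atTop (nhds (F L 0)) := by
        simpa only [hconst] using htend
      exact tendsto_nhds_unique this tendsto_const_nhds
    have hL1 : L < 1 := lt_of_le_of_lt hLa ha
    exact absurd hFL0 (ne_of_gt (hFpos L hL0 hL1))
  refine ⟨ε₀, hε₀pos, ?_, ?_, ?_⟩
  · intro ε hε hεε₀
    exact ⟨hpe_mem ε hε.le, hpe_pos ε hε hεε₀, hpe_le_one ε hε.le, hzero ε hε hεε₀,
      fun u hu hupe => hlt ε u hu hupe⟩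
  · intro ε₁ ε₂ h1 h12 _
    exact hmono ε₁ ε₂ h1 h12
  · rw [tendsto_order]
    constructor
    · intro a ha
      obtain ⟨ε₁, hε₁pos, hε₁le, hpe⟩ := claim a ha
      filter_upwards [Ioc_mem_nhdsGT_of_mem
        (show (0:ℝ) ∈ Set.Ico 0 ε₁ from ⟨le_rfl, hε₁pos⟩)] with ε hε
      exact lt_of_lt_of_le hpe (hmono ε ε₁ hε.1 hε.2)
    · intro a ha
      filter_upwards [Ioc_mem_nhdsGT_of_mem
        (show (0:ℝ) ∈ Set.Ico 0 ε₀ from ⟨le_rfl, hε₀pos⟩)] with ε hε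
      exact lt_of_le_of_lt (hpe_le_one ε hε.1.le) ha
end
end

section
/- Assume Assumption (F). Let c ∈ [0, 2√(dF(0,0))), let e ∈ S^{N−1}, and let p : ℝ^N → ℝ be a C² function with 0 < p(x) ≤ 1 for all x ∈ ℝ^N satisfying dΔp(x) + c ∇p(x)·e + p(x) F(p(x), 0) = 0 for all x ∈ ℝ^N. Then p(x) = 1 for all x ∈ ℝ^N. (Lemma 4.4, bounded positive stationary solutions of the monostable equation with drift.) -/
open Filter Set

noncomputable section

abbrev E (N : ℕ) : Type := EuclideanSpace ℝ (Fin N)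

/-- The Laplacian in the space variable, as the sum of second derivatives in the
coordinate directions. -/
noncomputable def lap {N : ℕ} (f : E N → ℝ) (x : E N) : ℝ :=
  ∑ i : Fin N,
    fderiv ℝ (fun y : E N => fderiv ℝ f y (EuclideanSpace.single i (1 : ℝ))) x
      (EuclideanSpace.single i (1 : ℝ))

/-- Assumption (F). -/
structure AssumpF (F : ℝ → ℝ → ℝ) : Prop where
  smooth : ContDiffOn ℝ 1 (Function.uncurry F) (Set.Ici (0 : ℝ) ×ˢ Set.Ici (0 : ℝ))
  strictAnti : ∀ u : ℝ, 0 < u → StrictAntiOn (F u) (Set.Ici (0 : ℝ))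
  one_zero : F 1 0 = 0
  pos : ∀ u : ℝ, 0 ≤ u → u < 1 → 0 < F u 0
  kpp : ∀ u : ℝ, 0 ≤ u → F u 0 ≤ F 0 0

open Topology Real Finset

/-!
Let `m = inf p < 1`. At a minimum point the equation would give `p F(p, 0) ≤ 0`, so `p > m`
everywhere. With `aᵢ = -c eᵢ / (2d)` the function `φ(x) = ∏ᵢ exp(aᵢ xᵢ) cos(w xᵢ)` is positive on
the open cube `|xᵢ| < π / (2w)`, vanishes on its boundary, and satisfies
`d Δφ + c ∂ₑφ = -λ φ` with `λ = c² / (4d) + N d w²`, which is `< F(0, 0)` for small `w`.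
Then `λ (s - m) < s F(s, 0)` on some interval `(m, θ]`. Sliding `m + ε φ(· - x₀)` up under `p`
on the cube, a first contact below level `θ` is an interior local minimum of
`p - ε φ(· - x₀)`, where the equation yields `p F(p, 0) ≤ λ (p - m)`, which is impossible.
So `p(x₀) ≥ m + ε₀` for a fixed `ε₀ > 0` and every `x₀`, contradicting `m = inf p`.
-/

theorem IsLocalMin.nonneg_of_hasDerivAt_of_hasDerivAt {f f' : ℝ → ℝ} {x a : ℝ}
    (hmin : IsLocalMin f x) (hf : ∀ t, HasDerivAt f (f' t) t) (hf' : HasDerivAt f' a x) :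
    0 ≤ a := by
  by_contra! ha
  have hf'x : f' x = 0 := hmin.hasDerivAt_eq_zero (hf x)
  have hneg : ∀ᶠ t in 𝓝[>] x, f' t < 0 := by
    filter_upwards [(hasDerivAt_iff_tendsto_slope.1 hf').mono_left (nhdsGT_le_nhdsNE x)
      |>.eventually (gt_mem_nhds ha), self_mem_nhdsWithin] with t ht hxt
    rwa [slope_def_field, hf'x, sub_zero, div_lt_iff₀ (sub_pos.2 hxt), zero_mul] at ht
  obtain ⟨u, hxu, hu⟩ := mem_nhdsGT_iff_exists_Ioo_subset.1 hneg
  obtain ⟨t, hft, hxt, htu⟩ :=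
    ((hmin.filter_mono nhdsWithin_le_nhds).and (Ioo_mem_nhdsGT hxu)).exists (f := 𝓝[>] x)
  obtain ⟨ξ, hξ, hξslope⟩ := exists_hasDerivAt_eq_slope f f' hxt
    (fun y _ => (hf y).continuousAt.continuousWithinAt) (fun y _ => hf y)
  have : f' ξ < 0 := hu ⟨hξ.1, hξ.2.trans htu⟩
  rw [hξslope, div_lt_iff₀ (sub_pos.2 hxt), zero_mul] at this
  linarith

section Line

variable {V : Type*} [NormedAddCommGroup V] [NormedSpace ℝ V]

theorem hasDerivAt_comp_add_smul {p : V → ℝ} (hp : Differentiable ℝ p) (x v : V) (t : ℝ) :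
    HasDerivAt (fun s : ℝ => p (x + s • v)) (fderiv ℝ p (x + t • v) v) t := by
  have hline : HasDerivAt (fun s : ℝ => x + s • v) v t := by
    simpa using ((hasDerivAt_id t).smul_const v).const_add x
  exact (hp (x + t • v)).hasFDerivAt.comp_hasDerivAt t hline

theorem hasDerivAt_fderiv_comp_add_smul {p : V → ℝ} (hp : ContDiff ℝ 2 p) (x v : V) :
    HasDerivAt (fun s : ℝ => fderiv ℝ p (x + s • v) v)
      (fderiv ℝ (fun y => fderiv ℝ p y v) x v) 0 := by
  have hdiff : Differentiable ℝ (fun y => fderiv ℝ p y v) :=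
    ((hp.fderiv_right (m := 1) (by norm_num)).differentiable (by norm_num)).clm_apply
      (differentiable_const v)
  simpa using hasDerivAt_comp_add_smul hdiff x v 0

theorem IsLocalMin.comp_add_smul {f : V → ℝ} {x : V} (hmin : IsLocalMin f x) (v : V) :
    IsLocalMin (fun t : ℝ => f (x + t • v)) 0 :=
  IsLocalMin.comp_continuous (g := fun t : ℝ => x + t • v) (by simpa using hmin) (by fun_prop)

theorem IsLocalMin.le_fderiv_fderiv_apply {p : V → ℝ} (hp : ContDiff ℝ 2 p) {x v : V}
    {ψ ψ' : ℝ → ℝ} {a : ℝ} (hψ : ∀ t, HasDerivAt ψ (ψ' t) t) (hψ' : HasDerivAt ψ' a 0)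
    (hmin : IsLocalMin (fun t => p (x + t • v) - ψ t) 0) :
    a ≤ fderiv ℝ (fun y => fderiv ℝ p y v) x v :=
  sub_nonneg.1 <| hmin.nonneg_of_hasDerivAt_of_hasDerivAt
    (fun t => (hasDerivAt_comp_add_smul (hp.differentiable (by norm_num)) x v t).sub (hψ t))
    ((hasDerivAt_fderiv_comp_add_smul hp x v).sub hψ')

end Line

theorem lap_nonneg_of_isLocalMin {N : ℕ} {p : E N → ℝ} (hp : ContDiff ℝ 2 p) {x : E N}
    (hmin : IsLocalMin p x) : 0 ≤ lap p x :=
  sum_nonneg fun i _ => IsLocalMin.le_fderiv_fderiv_apply hp (ψ := 0) (ψ' := 0)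
    (fun t => hasDerivAt_const t 0) (hasDerivAt_const 0 0) (by simpa using hmin.comp_add_smul _)

theorem IsCompact.le_or_exists_touch {X : Type*} [TopologicalSpace X] {K : Set X}
    (hK : IsCompact K) {u φ : X → ℝ} (hu : ContinuousOn u K) (hφ : ContinuousOn φ K)
    (hu0 : ∀ x ∈ K, 0 ≤ u x) {ε₀ : ℝ} (hε₀ : 0 ≤ ε₀) :
    (∀ x ∈ K, ε₀ * φ x ≤ u x) ∨
      ∃ ε ∈ Ico 0 ε₀, (∀ x ∈ K, ε * φ x ≤ u x) ∧ ∃ x ∈ K, u x = ε * φ x := by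
  rcases K.eq_empty_or_nonempty with rfl | hne
  · simp
  set A := Icc 0 ε₀ ∩ ⋂ x ∈ K, {ε | ε * φ x ≤ u x}
  have hA : IsClosed A :=
    isClosed_Icc.inter (isClosed_biInter fun x _ => isClosed_le (by fun_prop) continuous_const)
  have hbdd : BddAbove A := ⟨ε₀, fun ε hε => hε.1.2⟩
  have h0A : (0 : ℝ) ∈ A := ⟨⟨le_rfl, hε₀⟩, mem_iInter₂.2 fun x hx => by simpa using hu0 x hx⟩
  have hmem : sSup A ∈ A := hA.csSup_mem ⟨0, h0A⟩ hbdd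
  have hle : ∀ x ∈ K, sSup A * φ x ≤ u x := fun x hx => mem_iInter₂.1 hmem.2 x hx
  rcases hmem.1.2.eq_or_lt with heq | hlt
  · exact Or.inl (heq ▸ hle)
  right
  obtain ⟨y, hyK, hy⟩ := hK.exists_isMinOn hne (hu.sub (hφ.const_mul (sSup A)))
  refine ⟨sSup A, ⟨hmem.1.1, hlt⟩, hle, y, hyK, ?_⟩
  by_contra hne
  set σ := u y - sSup A * φ y
  have hσ : 0 < σ := sub_pos.2 ((hle y hyK).lt_of_ne' hne)
  obtain ⟨M, hM⟩ := hK.exists_bound_of_continuousOn hφ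
  set ε := min ε₀ (sSup A + σ / (|M| + 1))
  have hεA : ε ∈ A := by
    refine ⟨⟨hmem.1.1.trans (le_min hlt.le ?_), min_le_left _ _⟩, mem_iInter₂.2 fun x hx => ?_⟩
    · exact le_add_of_nonneg_right (by positivity)
    · change ε * φ x ≤ u x
      have hφx : φ x ≤ |M| + 1 := by
        linarith [le_abs_self (φ x), Real.norm_eq_abs (φ x) ▸ hM x hx, le_abs_self M]
      have hgap : (ε - sSup A) * (|M| + 1) ≤ σ := by
        rw [← le_div_iff₀ (by positivity)]
        linarith [min_le_right ε₀ (sSup A + σ / (|M| + 1))]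
      have hσx : σ ≤ u x - sSup A * φ x := hy hx
      have hε : sSup A ≤ ε := le_min hlt.le (le_add_of_nonneg_right (by positivity))
      nlinarith [mul_nonneg (sub_nonneg.2 hε) (sub_nonneg.2 hφx)]
  exact (le_csSup hbdd hεA).not_gt (lt_min hlt (lt_add_of_pos_right _ (by positivity)))

def expCos (a w t : ℝ) : ℝ := exp (a * t) * cos (w * t)

def expCosDeriv (a w t : ℝ) : ℝ := exp (a * t) * (a * cos (w * t) - w * sin (w * t))

theorem hasDerivAt_expCos (a w t : ℝ) : HasDerivAt (expCos a w) (expCosDeriv a w t) t := by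
  have h := ((hasDerivAt_id t).const_mul a).exp.mul ((hasDerivAt_id t).const_mul w).cos
  simp only [id, mul_one] at h
  exact h.congr_deriv (by simp only [expCosDeriv]; ring)

def expCosDeriv2 (a w t : ℝ) : ℝ := 2 * a * expCosDeriv a w t - (a ^ 2 + w ^ 2) * expCos a w t

theorem hasDerivAt_expCosDeriv (a w t : ℝ) :
    HasDerivAt (expCosDeriv a w) (expCosDeriv2 a w t) t := by
  have hlin := fun k : ℝ => (hasDerivAt_id t).const_mul k
  have h := (hlin a).exp.mul (((hlin w).cos.const_mul a).sub ((hlin w).sin.const_mul w))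
  simp only [id, mul_one] at h
  exact h.congr_deriv (by simp only [expCos, expCosDeriv, expCosDeriv2, Pi.sub_apply]; ring)

@[simp]
theorem expCos_zero (a w : ℝ) : expCos a w 0 = 1 := by simp [expCos]

theorem continuous_expCos (a w : ℝ) : Continuous (expCos a w) := by
  unfold expCos; fun_prop

theorem expCos_of_abs_eq {a w t : ℝ} (hw : 0 < w) (ht : |t| = π / (2 * w)) :
    expCos a w t = 0 := by
  rw [expCos, ← cos_abs, abs_mul, abs_of_pos hw, ht, show w * (π / (2 * w)) = π / 2 by field_simp,
    cos_pi_div_two, mul_zero]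

section Cube

variable {N : ℕ}

def cube (N : ℕ) (b : ℝ) : Set (E N) := {z | ∀ i, |z i| ≤ b}

theorem isCompact_cube (b : ℝ) : IsCompact (cube N b) := by
  have : cube N b = EuclideanSpace.equiv (Fin N) ℝ ⁻¹' Icc (fun _ => -b) fun _ => b := by
    ext z; simp [cube, abs_le, Pi.le_def, forall_and]
  rw [this]
  exact (EuclideanSpace.equiv (Fin N) ℝ).toHomeomorph.isCompact_preimage.2 isCompact_Icc

theorem cube_mem_nhds {b : ℝ} {z : E N} (hz : ∀ i, |z i| < b) : cube N b ∈ 𝓝 z := by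
  have hopen : IsOpen {y : E N | ∀ i, |y i| < b} := by
    simp only [ofPred_forall]
    exact isOpen_iInter_of_finite fun i => isOpen_lt (by fun_prop) continuous_const
  exact mem_of_superset (hopen.mem_nhds hz) fun y hy i => (hy i).le

end Cube

section ProdExpCos

variable {N : ℕ}

def prodExpCos (a : Fin N → ℝ) (w : ℝ) (z : E N) : ℝ := ∏ i, expCos (a i) w (z i)

variable (a : Fin N → ℝ) (w : ℝ)

theorem continuous_prodExpCos : Continuous (prodExpCos a w) :=
  continuous_finsetProd _ fun i _ => (continuous_expCos _ _).comp (by fun_prop)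

@[simp]
theorem prodExpCos_zero : prodExpCos a w 0 = 1 := by simp [prodExpCos]

variable {a w}

theorem abs_lt_of_prodExpCos_pos (hw : 0 < w) {z : E N} (hz : z ∈ cube N (π / (2 * w)))
    (hpos : 0 < prodExpCos a w z) (i : Fin N) : |z i| < π / (2 * w) :=
  (hz i).lt_of_ne fun h => hpos.ne' (prod_eq_zero (mem_univ i) (expCos_of_abs_eq hw h))

theorem prodExpCos_add_smul_single (z : E N) (i : Fin N) (t : ℝ) :
    prodExpCos a w (z + t • EuclideanSpace.single i 1) =
      expCos (a i) w (z i + t) * ∏ k ∈ univ.erase i, expCos (a k) w (z k) := by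
  rw [prodExpCos, ← mul_prod_erase _ _ (mem_univ i)]
  congr 1
  · simp
  · refine prod_congr rfl fun k hk => ?_
    simp [(mem_erase.1 hk).1]

theorem hasDerivAt_prodExpCos_add_smul (z v : E N) :
    HasDerivAt (fun t : ℝ => prodExpCos a w (z + t • v))
      (∑ i, (∏ k ∈ univ.erase i, expCos (a k) w (z k)) * (v i * expCosDeriv (a i) w (z i))) 0 := by
  have h : ∀ i ∈ (univ : Finset (Fin N)), HasDerivAt (fun t : ℝ => expCos (a i) w (z i + t * v i))
      (v i * expCosDeriv (a i) w (z i)) 0 := by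
    intro i _
    have := (hasDerivAt_expCos (a i) w (z i + 0 * v i)).comp 0
      (((hasDerivAt_id (0 : ℝ)).mul_const (v i)).const_add (z i))
    simpa [mul_comm, Function.comp_def] using this
  simpa [prodExpCos] using HasDerivAt.fun_finsetProd h

end ProdExpCos

section Comparison

variable {N : ℕ} {d c : ℝ} {e : E N}

def driftExponent (c d : ℝ) (e : E N) (i : Fin N) : ℝ := -(c / (2 * d)) * e i

theorem sum_drift_prodExpCos (hd : d ≠ 0) (he : ‖e‖ = 1) (w : ℝ) (z : E N) :
    ∑ i, (d * expCosDeriv2 (driftExponent c d e i) w (z i)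
        + c * (e i * expCosDeriv (driftExponent c d e i) w (z i)))
      * ∏ k ∈ univ.erase i, expCos (driftExponent c d e k) w (z k)
      = -(c ^ 2 / (4 * d) + N * d * w ^ 2) * prodExpCos (driftExponent c d e) w z := by
  have hsq : ∑ i, e i ^ 2 = 1 := by rw [← EuclideanSpace.real_norm_sq_eq, he, one_pow]
  have hterm : ∀ i, (d * expCosDeriv2 (driftExponent c d e i) w (z i)
        + c * (e i * expCosDeriv (driftExponent c d e i) w (z i)))
      * ∏ k ∈ univ.erase i, expCos (driftExponent c d e k) w (z k)
      = -(c ^ 2 / (4 * d) * e i ^ 2 + d * w ^ 2) * prodExpCos (driftExponent c d e) w z := by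
    intro i
    rw [prodExpCos, ← mul_prod_erase _ _ (mem_univ i), expCosDeriv2, driftExponent]
    field_simp
    ring
  rw [sum_congr rfl fun i _ => hterm i, ← sum_mul, sum_neg_distrib, sum_add_distrib, ← mul_sum, hsq,
    sum_const, card_fin, nsmul_eq_mul]
  ring

theorem mul_F_le_of_isLocalMin {F : ℝ → ℝ → ℝ} {p : E N → ℝ} (hd : 0 < d) (he : ‖e‖ = 1)
    (hp : ContDiff ℝ 2 p)
    (heq : ∀ x : E N, d * lap p x + c * fderiv ℝ p x e + p x * F (p x) 0 = 0)
    {w ε : ℝ} {x₀ x : E N}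
    (hmin : IsLocalMin (fun y => p y - ε * prodExpCos (driftExponent c d e) w (y - x₀)) x) :
    p x * F (p x) 0 ≤
      (c ^ 2 / (4 * d) + N * d * w ^ 2) * (ε * prodExpCos (driftExponent c d e) w (x - x₀)) := by
  set a := driftExponent c d e
  set z := x - x₀
  set C : Fin N → ℝ := fun i => ∏ k ∈ univ.erase i, expCos (a k) w (z k)
  have hline : ∀ v : E N,
      IsLocalMin (fun t : ℝ => p (x + t • v) - ε * prodExpCos a w (z + t • v)) 0 := by
    intro v
    simpa [z, add_sub_right_comm] using hmin.comp_add_smul v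
  have hdir : fderiv ℝ p x e = ε * ∑ i, C i * (e i * expCosDeriv (a i) w (z i)) := by
    have := (hline e).hasDerivAt_eq_zero
      ((hasDerivAt_comp_add_smul (hp.differentiable (by norm_num)) x e 0).sub
        ((hasDerivAt_prodExpCos_add_smul z e).const_mul ε))
    simpa [sub_eq_zero] using this
  have hcoord : ∀ i, ε * (expCosDeriv2 (a i) w (z i) * C i) ≤
      fderiv ℝ (fun y => fderiv ℝ p y (EuclideanSpace.single i 1)) x
        (EuclideanSpace.single i 1) := by
    intro i
    refine IsLocalMin.le_fderiv_fderiv_apply hp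
      (ψ := fun t => ε * (expCos (a i) w (z i + t) * C i))
      (ψ' := fun t => ε * (expCosDeriv (a i) w (z i + t) * C i))
      (fun t => (((hasDerivAt_expCos (a i) w (z i + t)).comp_const_add (z i) t).mul_const
        (C i)).const_mul ε) ?_ ?_
    · simpa using (((hasDerivAt_expCosDeriv (a i) w (z i + 0)).comp_const_add (z i) 0).mul_const
        (C i)).const_mul ε
    · simpa only [prodExpCos_add_smul_single] using hline (EuclideanSpace.single i 1)
  have hlap : d * (ε * ∑ i, expCosDeriv2 (a i) w (z i) * C i) ≤ d * lap p x := by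
    rw [mul_sum]
    exact mul_le_mul_of_nonneg_left (sum_le_sum fun i _ => hcoord i) hd.le
  have hsplit : ∑ i, (d * expCosDeriv2 (a i) w (z i) + c * (e i * expCosDeriv (a i) w (z i))) * C i
      = d * ∑ i, expCosDeriv2 (a i) w (z i) * C i
        + c * ∑ i, C i * (e i * expCosDeriv (a i) w (z i)) := by
    rw [mul_sum, mul_sum, ← sum_add_distrib]
    exact sum_congr rfl fun i _ => by ring
  have hdrift := sum_drift_prodExpCos (c := c) hd.ne' he w z
  rw [hsplit] at hdrift
  linear_combination heq x + hlap - ε * hdrift - c * hdir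

end Comparison

theorem exists_pos_add_mul_sq_lt {A B K : ℝ} (h : A < B) : ∃ w > 0, A + K * w ^ 2 < B := by
  have hlim : Tendsto (fun w : ℝ => A + K * w ^ 2) (𝓝[>] 0) (𝓝 A) :=
    ((by fun_prop : Continuous fun w : ℝ => A + K * w ^ 2).tendsto' 0 A (by simp)).mono_left
      nhdsWithin_le_nhds
  obtain ⟨w, hwB, hw⟩ := ((hlim.eventually (gt_mem_nhds h)).and self_mem_nhdsWithin).exists
  exact ⟨w, hw, hwB⟩

theorem exists_forall_mem_Ioc_mul_sub_lt {g : ℝ → ℝ} {m lam : ℝ} (hm : 0 ≤ m)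
    (hg : ContinuousWithinAt g (Ici 0) m) (hgm : 0 < g m) (hlam : lam < g 0) :
    ∃ θ > m, ∀ s ∈ Ioc m θ, lam * (s - m) < s * g s := by
  suffices ∀ᶠ s in 𝓝[>] m, lam * (s - m) < s * g s from
    mem_nhdsGT_iff_exists_Ioc_subset.1 this
  have hnhds : 𝓝[>] m ≤ 𝓝[Ici 0] m := nhdsWithin_mono _ fun s hs => hm.trans (le_of_lt hs)
  rcases hm.eq_or_lt with rfl | hm
  · filter_upwards [hnhds (hg.eventually (lt_mem_nhds hlam)), self_mem_nhdsWithin] with s hs hs0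
    rw [sub_zero, mul_comm]
    exact mul_lt_mul_of_pos_left hs hs0
  · have hG : ContinuousWithinAt (fun s => s * g s - lam * (s - m)) (Ici 0) m :=
      (continuousWithinAt_id.mul hg).sub (by fun_prop)
    filter_upwards [hnhds (hG.eventually (lt_mem_nhds (by simpa using mul_pos hm hgm)))] with s hs
    linarith

section Solution

variable {N : ℕ} {d c : ℝ} {F : ℝ → ℝ → ℝ} {e : E N} {p : E N → ℝ}

theorem lt_of_forall_le_of_lt_one (hd : 0 < d) (hp : ContDiff ℝ 2 p)
    (heq : ∀ x : E N, d * lap p x + c * fderiv ℝ p x e + p x * F (p x) 0 = 0)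
    (hF : ∀ u, 0 ≤ u → u < 1 → 0 < F u 0) (hpos : ∀ x, 0 < p x) {m : ℝ}
    (hm : ∀ x, m ≤ p x) (hm1 : m < 1) (x : E N) : m < p x := by
  refine (hm x).lt_of_ne fun hmx => ?_
  have hmin : IsLocalMin p x := Eventually.of_forall fun y => hmx ▸ hm y
  have hlap := mul_nonneg hd.le (lap_nonneg_of_isLocalMin hp hmin)
  have hFx := mul_pos (hpos x) (hF (p x) (hpos x).le (hmx ▸ hm1))
  have := heq x
  rw [hmin.fderiv_eq_zero, zero_apply] at this
  linarith

theorem exists_pos_forall_add_le (hd : 0 < d) (he : ‖e‖ = 1) (hp : ContDiff ℝ 2 p)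
    (heq : ∀ x : E N, d * lap p x + c * fderiv ℝ p x e + p x * F (p x) 0 = 0)
    {w : ℝ} (hw : 0 < w) {m θ : ℝ} (hm : ∀ x, m < p x) (hθ : m < θ)
    (hθF : ∀ s ∈ Ioc m θ, (c ^ 2 / (4 * d) + N * d * w ^ 2) * (s - m) < s * F s 0) :
    ∃ ε₀ > 0, ∀ x₀, m + ε₀ ≤ p x₀ := by
  set Φ := prodExpCos (driftExponent c d e) w
  set B := cube N (π / (2 * w))
  have h0B : (0 : E N) ∈ B := fun i => by rw [PiLp.zero_apply, abs_zero]; positivity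
  obtain ⟨M, hM⟩ := (isCompact_cube _).exists_bound_of_continuousOn
    (continuous_prodExpCos (driftExponent c d e) w).continuousOn
  have hM1 : 1 ≤ M := by simpa [Φ] using hM 0 h0B
  have hε₀ : 0 < (θ - m) / M := div_pos (sub_pos.2 hθ) (by positivity)
  refine ⟨(θ - m) / M, hε₀, fun x₀ => ?_⟩
  rcases (isCompact_cube _).le_or_exists_touch (u := fun z => p (z + x₀) - m) (φ := Φ)
    ((hp.continuous.comp (continuous_add_const x₀)).sub continuous_const).continuousOn
    (continuous_prodExpCos _ _).continuousOn (fun z _ => (sub_pos.2 (hm _)).le) hε₀.le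
    with h | ⟨ε, hε, hle, z, hzB, hz⟩
  · have := h 0 h0B
    simp only [Φ, prodExpCos_zero, zero_add, mul_one] at this
    linarith
  exfalso
  have hεΦ : 0 < ε * Φ z := hz ▸ sub_pos.2 (hm _)
  have hΦ : 0 < Φ z := pos_of_mul_pos_right hεΦ hε.1
  have hmin : IsLocalMin (fun y => p y - ε * Φ (y - x₀)) (z + x₀) := by
    have hnhds : B ∈ 𝓝 (z + x₀ - x₀) := by
      simpa using cube_mem_nhds (abs_lt_of_prodExpCos_pos hw hzB hΦ)
    filter_upwards [(continuous_sub_right x₀).continuousAt.preimage_mem_nhds hnhds] with y hy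
    have := hle (y - x₀) hy
    simp only [sub_add_cancel, add_sub_cancel_right] at this hz ⊢
    linarith
  have hθz : p (z + x₀) ∈ Ioc m θ := by
    refine ⟨hm _, ?_⟩
    have hΦM : Φ z ≤ M := (le_abs_self _).trans (Real.norm_eq_abs (Φ z) ▸ hM z hzB)
    have : ε * Φ z ≤ (θ - m) / M * M := mul_le_mul hε.2.le hΦM hΦ.le hε₀.le
    rw [div_mul_cancel₀ _ (by positivity)] at this
    linarith
  have := mul_F_le_of_isLocalMin hd he hp heq hmin
  rw [add_sub_cancel_right] at this
  change _ ≤ _ * (ε * Φ z) at this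
  have hreact := hθF _ hθz
  rw [hz] at hreact
  linarith

end Solution

theorem stationary_monostable_drift_general
    (N : ℕ) (d : ℝ) (hd : 0 < d)
    (F : ℝ → ℝ → ℝ) (hF : AssumpF F)
    (c : ℝ) (hc0 : 0 ≤ c) (hc : c < 2 * Real.sqrt (d * F 0 0))
    (e : E N) (he : ‖e‖ = 1)
    (p : E N → ℝ) (hp : ContDiff ℝ 2 p)
    (hpos : ∀ x : E N, 0 < p x) (hle : ∀ x : E N, p x ≤ 1)
    (heq : ∀ x : E N, d * lap p x + c * fderiv ℝ p x e + p x * F (p x) 0 = 0) :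
    ∀ x : E N, p x = 1 := by
  intro x₁
  by_contra hx₁
  set m := sInf (range p)
  have hp0 : ∀ y ∈ range p, 0 ≤ y := forall_mem_range.2 fun y => (hpos y).le
  have hm : ∀ x, m ≤ p x := fun x => csInf_le ⟨0, hp0⟩ ⟨x, rfl⟩
  have hm0 : 0 ≤ m := le_csInf (range_nonempty p) hp0
  have hm1 : m < 1 := (hm x₁).trans_lt ((hle x₁).lt_of_ne hx₁)
  have hcF : c ^ 2 / (4 * d) < F 0 0 := by
    have := (lt_sqrt (by positivity)).1 (show c / 2 < √(d * F 0 0) by linarith)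
    rw [div_lt_iff₀ (by positivity)]
    linarith
  obtain ⟨w, hw, hwF⟩ := exists_pos_add_mul_sq_lt (K := N * d) hcF
  have hFm : ContinuousWithinAt (fun s => F s 0) (Ici 0) m :=
    hF.smooth.continuousOn.comp (by fun_prop : Continuous fun s : ℝ => (s, (0 : ℝ))).continuousOn
      (fun s hs => ⟨hs, self_mem_Ici⟩) m hm0
  obtain ⟨θ, hθ, hθF⟩ := exists_forall_mem_Ioc_mul_sub_lt hm0 hFm (hF.pos m hm0 hm1) hwF
  obtain ⟨ε₀, hε₀, hslide⟩ := exists_pos_forall_add_le hd he hp heq hw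
    (lt_of_forall_le_of_lt_one hd hp heq hF.pos hpos hm hm1) hθ hθF
  linarith [le_csInf (range_nonempty p) (forall_mem_range.2 hslide)]

/-- Lemma 4.4: a bounded positive stationary solution of the monostable equation
with drift is identically `1`. -/
theorem stationary_monostable_drift
    (N : ℕ) (hN : 1 ≤ N) (d : ℝ) (hd : 0 < d)
    (F : ℝ → ℝ → ℝ) (hF : AssumpF F)
    (c : ℝ) (hc0 : 0 ≤ c) (hc : c < 2 * Real.sqrt (d * F 0 0))
    (e : E N) (he : ‖e‖ = 1)
    (p : E N → ℝ) (hp : ContDiff ℝ 2 p)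
    (hpos : ∀ x : E N, 0 < p x) (hle : ∀ x : E N, p x ≤ 1)
    (heq : ∀ x : E N, d * lap p x + c * fderiv ℝ p x e + p x * F (p x) 0 = 0) :
    ∀ x : E N, p x = 1 :=
  stationary_monostable_drift_general N d hd F hF c hc0 hc e he p hp hpos hle heq
end
end

section
/- For the Holling type II prey-predator nonlinearities: (i) there is a unique u* ∈ (0,1) with μΠ(u*) = a; (ii) for every (u,v) ∈ O, the derivative of Φ along the vector field satisfies (u(1−u) − Π(u)v, v(μΠ(u) − a)) · ∇Φ(u,v) = (μ/m)(Π(u) − Π(u*))((1−u)(b+u) − m v*); (iii) if moreover b ≥ m v*, then (u(1−u) − Π(u)v, v(μΠ(u) − a)) · ∇Φ(u,v) ≤ 0 for all (u,v) ∈ O. (Example in Section 7, Holling II system.) -/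
open Filter Set MeasureTheory

noncomputable section

/-- The open region `O = {(u,v) : 0 < u < 1, v > 0}`. -/
def Oset : Set (ℝ × ℝ) := {p : ℝ × ℝ | 0 < p.1 ∧ p.1 < 1 ∧ 0 < p.2}

/-- The Holling type II functional response `Π(u) = mu/(b+u)`. -/
noncomputable def PiH (m b : ℝ) (u : ℝ) : ℝ := m * u / (b + u)

/-- The Lyapunov function for the Holling type II prey-predator system, where
`u*` satisfies `μΠ(u*) = a` and `v* = (1 − u*)(b + u*)/m`. -/
noncomputable def PhiH (m b μ us : ℝ) : ℝ × ℝ → ℝ := fun p =>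
  μ * (∫ ξ in us..p.1, (PiH m b ξ - PiH m b us) / PiH m b ξ) +
    ∫ η in ((1 - us) * (b + us) / m)..p.2, (η - (1 - us) * (b + us) / m) / η

/-!
Since `μΠ(u) = a` is the linear equation `u (μm - a) = ab`, its only root is `u* = ab/(μm - a)`,
which lies in `(0,1)` exactly because `μm/(b+1) > a`. By the fundamental theorem of calculus,
`∂Φ/∂u = μ(Π(u) - Π(u*))/Π(u)` and `∂Φ/∂v = (v - v*)/v`; substituting `a = μΠ(u*)` the terms in `v`
cancel, leaving the stated identity. Finally
`(μ/m)(Π(u) - Π(u*))((1-u)(b+u) - m v*) = μb (u - u*)² (1 - b - u - u*) / ((b+u)(b+u*))`,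
and `m v* ≤ b` means `1 - b - u* ≤ 0`, so this is nonpositive.
-/

theorem hasDerivAt_integral_of_continuousOn_Ioi {f : ℝ → ℝ} (hf : ContinuousOn f (Ioi 0))
    {c x : ℝ} (hc : 0 < c) (hx : 0 < x) :
    HasDerivAt (fun u => ∫ ξ in c..u, f ξ) (f x) x := by
  have hsub : uIcc c x ⊆ Ioi 0 := fun y hy => lt_of_lt_of_le (lt_min hc hx) hy.1
  exact intervalIntegral.integral_hasDerivAt_right (hf.mono hsub).intervalIntegrable
    (hf.stronglyMeasurableAtFilter isOpen_Ioi x hx) (hf.continuousAt (isOpen_Ioi.mem_nhds hx))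

namespace PiH

variable {m b : ℝ}

theorem pos (hm : 0 < m) (hb : 0 ≤ b) {u : ℝ} (hu : 0 < u) : 0 < PiH m b u := by
  unfold PiH; positivity

theorem continuousOn_Ioi (hb : 0 ≤ b) : ContinuousOn (PiH m b) (Ioi 0) :=
  (continuousOn_const.mul continuousOn_id).div (continuousOn_const.add continuousOn_id)
    fun x (hx : 0 < x) => by positivity

theorem mul_eq_iff {μ a u : ℝ} (hu : b + u ≠ 0) :
    μ * PiH m b u = a ↔ u * (μ * m - a) = a * b := by
  unfold PiH
  rw [← mul_div_assoc, div_eq_iff hu]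
  constructor <;> intro h <;> linarith

theorem existsUnique_mul_eq {a μ : ℝ} (ha : 0 < a) (hb : 0 < b) (hab : a < μ * m / (b + 1)) :
    ∃! u : ℝ, u ∈ Ioo (0 : ℝ) 1 ∧ μ * PiH m b u = a := by
  have hgap : a * (b + 1) < μ * m := (lt_div_iff₀ (by linarith)).mp hab
  have hden : 0 < μ * m - a := by nlinarith
  refine ⟨a * b / (μ * m - a), ⟨⟨by positivity, ?_⟩, ?_⟩, ?_⟩
  · rw [div_lt_one hden]; linarith
  · rw [mul_eq_iff (by positivity), div_mul_cancel₀ _ hden.ne']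
  · rintro u ⟨⟨hu0, -⟩, hu⟩
    rw [mul_eq_iff (by positivity)] at hu
    rw [eq_div_iff hden.ne', hu]

theorem sub_mul_sub_eq (μ : ℝ) {u us : ℝ} (hm : m ≠ 0) (hu : b + u ≠ 0) (hus : b + us ≠ 0) :
    μ / m * (PiH m b u - PiH m b us) * ((1 - u) * (b + u) - (1 - us) * (b + us)) =
      μ * b / ((b + u) * (b + us)) * ((u - us) ^ 2 * (1 - b - u - us)) := by
  unfold PiH
  field_simp
  ring

theorem sub_mul_sub_nonpos {μ u us : ℝ} (hm : 0 < m) (hb : 0 ≤ b) (hμ : 0 ≤ μ) (hu : 0 < u)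
    (hus : 0 < us) (hvs : (1 - us) * (b + us) ≤ b) :
    μ / m * (PiH m b u - PiH m b us) * ((1 - u) * (b + u) - (1 - us) * (b + us)) ≤ 0 := by
  rw [sub_mul_sub_eq μ hm.ne' (by positivity) (by positivity)]
  have hsign : 1 - b - us ≤ 0 := by nlinarith
  exact mul_nonpos_of_nonneg_of_nonpos (by positivity)
    (mul_nonpos_of_nonneg_of_nonpos (sq_nonneg _) (by linarith))

end PiH

namespace PhiH

variable {m b μ us : ℝ}

theorem hasFDerivAt (hm : 0 < m) (hb : 0 ≤ b) (hus : us ∈ Ioo (0 : ℝ) 1) {p : ℝ × ℝ}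
    (hp : p ∈ Oset) :
    HasFDerivAt (PhiH m b μ us)
      ((μ * ((PiH m b p.1 - PiH m b us) / PiH m b p.1)) • ContinuousLinearMap.fst ℝ ℝ ℝ +
        ((p.2 - (1 - us) * (b + us) / m) / p.2) • ContinuousLinearMap.snd ℝ ℝ ℝ) p := by
  obtain ⟨hp1, -, hp2⟩ := hp
  have hvs : 0 < (1 - us) * (b + us) / m :=
    div_pos (mul_pos (by linarith [hus.2]) (by linarith [hus.1])) hm
  have hPi := PiH.continuousOn_Ioi (m := m) hb
  have hf : ContinuousOn (fun ξ => (PiH m b ξ - PiH m b us) / PiH m b ξ) (Ioi 0) :=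
    (hPi.sub continuousOn_const).div hPi fun x hx => (PiH.pos hm hb hx).ne'
  have hg : ContinuousOn (fun η => (η - (1 - us) * (b + us) / m) / η) (Ioi 0) :=
    (continuousOn_id.sub continuousOn_const).div continuousOn_id fun _ hx => ne_of_gt hx
  have h1 := (hasDerivAt_integral_of_continuousOn_Ioi hf hus.1 hp1).comp_hasFDerivAt p
    (hasFDerivAt_fst (𝕜 := ℝ) (p := p))
  have h2 := (hasDerivAt_integral_of_continuousOn_Ioi hg hvs hp2).comp_hasFDerivAt p
    (hasFDerivAt_snd (𝕜 := ℝ) (p := p))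
  have h : HasFDerivAt (PhiH m b μ us) (μ • _ + _) p := (h1.const_mul μ).add h2
  rwa [smul_smul] at h

theorem orbital_derivative_eq {a : ℝ} (hm : 0 < m) (hb : 0 ≤ b) (hus : us ∈ Ioo (0 : ℝ) 1)
    (hus_eq : μ * PiH m b us = a) {p : ℝ × ℝ} (hp : p ∈ Oset) :
    (p.1 * (1 - p.1) - PiH m b p.1 * p.2) * fderiv ℝ (PhiH m b μ us) p (1, 0) +
        p.2 * (μ * PiH m b p.1 - a) * fderiv ℝ (PhiH m b μ us) p (0, 1) =
      μ / m * (PiH m b p.1 - PiH m b us) *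
        ((1 - p.1) * (b + p.1) - m * ((1 - us) * (b + us) / m)) := by
  -- the logistic term is `Π(u)` times the prey nullcline `(1-u)(b+u)/m`
  have hlogistic : p.1 * (1 - p.1) = PiH m b p.1 * ((1 - p.1) * (b + p.1) / m) := by
    have : b + p.1 ≠ 0 := by linarith [hp.1]
    unfold PiH
    field_simp
  have hPi := (PiH.pos hm hb hp.1).ne'
  have hv := hp.2.2.ne'
  have hm' := hm.ne'
  rw [(hasFDerivAt hm hb hus hp).fderiv, ← hus_eq, hlogistic]
  simp only [add_apply, smul_apply, ContinuousLinearMap.coe_fst', ContinuousLinearMap.coe_snd',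
    smul_eq_mul]
  field_simp
  ring

end PhiH

/-- The Holling II example of Section 7: uniqueness of `u*`, the value of the
derivative of `Φ` along the vector field, and its nonpositivity when `b ≥ m v*`. -/
theorem holling_II_lyapunov
    (a b m μ : ℝ) (ha : 0 < a) (hb : 0 < b) (hm : 0 < m) (hμ : 0 < μ)
    (hab : a < μ * m / (b + 1)) :
    (∃! u : ℝ, u ∈ Set.Ioo (0 : ℝ) 1 ∧ μ * PiH m b u = a) ∧
    (∀ us : ℝ, us ∈ Set.Ioo (0 : ℝ) 1 → μ * PiH m b us = a →
      (∀ p ∈ Oset,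
        (p.1 * (1 - p.1) - PiH m b p.1 * p.2) * fderiv ℝ (PhiH m b μ us) p (1, 0) +
          p.2 * (μ * PiH m b p.1 - a) * fderiv ℝ (PhiH m b μ us) p (0, 1) =
          μ / m * (PiH m b p.1 - PiH m b us) *
            ((1 - p.1) * (b + p.1) - m * ((1 - us) * (b + us) / m))) ∧
      (m * ((1 - us) * (b + us) / m) ≤ b →
        ∀ p ∈ Oset,
          (p.1 * (1 - p.1) - PiH m b p.1 * p.2) * fderiv ℝ (PhiH m b μ us) p (1, 0) +
            p.2 * (μ * PiH m b p.1 - a) * fderiv ℝ (PhiH m b μ us) p (0, 1) ≤ 0)) := by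
  refine ⟨PiH.existsUnique_mul_eq ha hb hab, fun us hus hus_eq => ?_⟩
  have horbital := fun p (hp : p ∈ Oset) => PhiH.orbital_derivative_eq hm hb.le hus hus_eq hp
  refine ⟨horbital, fun hvs p hp => ?_⟩
  rw [horbital p hp, mul_div_cancel₀ _ hm.ne']
  rw [mul_div_cancel₀ _ hm.ne'] at hvs
  exact PiH.sub_mul_sub_nonpos hm hb.le hμ.le hp.1 hus.1 hvs
end
end
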